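/- Let n ≥ 1, 1 ≤ k ≤ n and 1 ≤ d ≤ min(k, n+1−k), and let x ∈ S_{n+1} be the block-swap permutation. Let v ∈ S_{n+1} satisfy v(j) < v(j+1) for all j ∈ {1,…,n} with j ≠ k, and suppose inv(v∘x) = inv(v) − d². Then (v∘x)(i) = v(i) for all i ∉ {k−d+1,…,k+d}, and the sequence (v∘x)(k−d+1) < (v∘x)(k−d+2) < ⋯ < (v∘x)(k+d) is strictly increasing and is a rearrangement of the values v(k−d+1),…,v(k+d); that is, v∘x is obtained from v by sorting the values v(k−d+1),…,v(k+d) into increasing order. -/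

import Mathlib

/-- The inversion number of a permutation `w` of `{1, …, n+1}` (modelled as a permutation
of `ℕ` supported on `{1, …, n+1}`): the number of pairs `1 ≤ i < j ≤ n+1` with
`w(i) > w(j)`.  It equals the Coxeter length of `w` in `S_{n+1}`. -/
def invNum (n : ℕ) (w : Equiv.Perm ℕ) : ℕ :=
  ((Finset.Icc 1 (n + 1) ×ˢ Finset.Icc 1 (n + 1)).filter
    (fun p => p.1 < p.2 ∧ w p.2 < w p.1)).card

/-!
Precomposing with the block swap `x` reverses the relative order of exactly the `d²` pairs
`(a, b)` with `a` in the left block `{k−d+1, …, k}` and `b` in the right block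
`{k+1, …, k+d}`, and preserves the order of every other pair. Hence `x` carries the inversions
of `v` outside this `d × d` rectangle injectively to inversions of `v ∘ x`, so
`inv(v) ≤ inv(v∘x) + #(inversions of v in the rectangle)`. A length drop of `d²` therefore
forces every pair of the rectangle to be an inversion of `v`; in particular
`v(k+d) < v(k−d+1)`. Since `v` increases on each block, `v ∘ x`, which lists the right block
before the left one, is increasing across the whole range `{k−d+1, …, k+d}`.
-/

open Finset Equiv

def inversions (n : ℕ) (w : Perm ℕ) : Finset (ℕ × ℕ) :=
  (Icc 1 (n + 1) ×ˢ Icc 1 (n + 1)).filter (fun p => p.1 < p.2 ∧ w p.2 < w p.1)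

theorem card_inversions (n : ℕ) (w : Perm ℕ) : (inversions n w).card = invNum n w := rfl

/-- The inversions of `v` off `C` are carried by `σ` to inversions of `v * σ⁻¹`. -/
theorem invNum_le_invNum_mul_inv_add_card_inter {n : ℕ} (v σ : Perm ℕ) (C : Finset (ℕ × ℕ))
    (hmaps : ∀ i ∈ Icc 1 (n + 1), σ i ∈ Icc 1 (n + 1))
    (hmono : ∀ a b, a < b → (a, b) ∉ C → σ a < σ b) :
    invNum n v ≤ invNum n (v * σ⁻¹) + (inversions n v ∩ C).card := by
  rw [← card_inversions, ← card_inversions, ← card_sdiff_add_card_inter (inversions n v) C]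
  refine Nat.add_le_add_right (card_le_card_of_injOn (Prod.map σ σ) ?_
    (Prod.map_injective.2 ⟨σ.injective, σ.injective⟩).injOn) _
  rintro ⟨a, b⟩ hab
  simp only [coe_sdiff, Set.mem_sdiff, mem_coe, inversions, mem_filter, mem_product] at hab
  obtain ⟨⟨⟨ha, hb⟩, hlt, hv⟩, hC⟩ := hab
  refine mem_filter.2 ⟨mem_product.2 ⟨hmaps a ha, hmaps b hb⟩, hmono a b hlt hC, ?_⟩
  simpa only [Prod.map_fst, Prod.map_snd, Perm.mul_apply, Perm.coe_inv, symm_apply_apply] using hv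

section BlockSwap

variable {k d i : ℕ}

def blockSwap (k d i : ℕ) : ℕ :=
  if k - d + 1 ≤ i ∧ i ≤ k then i + d else if k + 1 ≤ i ∧ i ≤ k + d then i - d else i

theorem blockSwap_of_left (h₁ : k - d + 1 ≤ i) (h₂ : i ≤ k) : blockSwap k d i = i + d := by
  simp [blockSwap, h₁, h₂]

theorem blockSwap_of_right (h₁ : k + 1 ≤ i) (h₂ : i ≤ k + d) : blockSwap k d i = i - d := by
  unfold blockSwap; split_ifs <;> omega

theorem blockSwap_of_notMem (h : i ∉ Icc (k - d + 1) (k + d)) : blockSwap k d i = i := by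
  rw [mem_Icc] at h; unfold blockSwap; split_ifs <;> omega

theorem blockSwap_involutive (hdk : d ≤ k) : Function.Involutive (blockSwap k d) := by
  intro i; unfold blockSwap; split_ifs <;> omega

theorem blockSwap_mem_Icc {a b : ℕ} (hdk : d ≤ k) (ha : a ≤ k - d + 1) (hb : k + d ≤ b)
    (hi : i ∈ Icc a b) : blockSwap k d i ∈ Icc a b := by
  rw [mem_Icc] at *; unfold blockSwap; split_ifs <;> omega

theorem blockSwap_lt_blockSwap {a b : ℕ} (hdk : d ≤ k) (hab : a < b)
    (h : (a, b) ∉ Icc (k - d + 1) k ×ˢ Icc (k + 1) (k + d)) :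
    blockSwap k d a < blockSwap k d b := by
  simp only [mem_product, mem_Icc, not_and_or, not_le] at h
  unfold blockSwap; split_ifs <;> omega

theorem image_blockSwap_Icc (hdk : d ≤ k) :
    (Icc (k - d + 1) (k + d)).image (blockSwap k d) = Icc (k - d + 1) (k + d) := by
  refine (image_subset_iff.2 fun i => blockSwap_mem_Icc hdk le_rfl le_rfl).antisymm fun i hi => ?_
  exact mem_image.2 ⟨blockSwap k d i, blockSwap_mem_Icc hdk le_rfl le_rfl hi,
    blockSwap_involutive hdk i⟩

theorem lt_of_invNum_mul_blockSwap {n : ℕ} (hd : 1 ≤ d) (hdk : d ≤ k) (hkd : k + d ≤ n + 1)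
    {v x : Perm ℕ} (hx : ⇑x = blockSwap k d)
    (hlen : (invNum n (v * x) : ℤ) = invNum n v - d ^ 2) : v (k + d) < v (k - d + 1) := by
  by_contra! hle
  set C := Icc (k - d + 1) k ×ˢ Icc (k + 1) (k + d)
  have hC : C.card = d ^ 2 := by
    rw [card_product, Nat.card_Icc, Nat.card_Icc, sq]; congr 1 <;> omega
  have hlt : (inversions n v ∩ C).card < C.card := by
    refine card_lt_card ((ssubset_iff_of_subset inter_subset_right).2
      ⟨(k - d + 1, k + d), by simp only [C, mem_product, mem_Icc]; omega, fun h => ?_⟩)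
    simp only [inversions, mem_inter, mem_filter] at h
    exact absurd h.1.2.2 hle.not_gt
  have hxinv : x⁻¹ = x := by
    ext i; rw [Perm.inv_eq_iff_eq, hx, blockSwap_involutive hdk]
  have hinv := invNum_le_invNum_mul_inv_add_card_inter v x C
    (fun i hi => hx ▸ blockSwap_mem_Icc hdk (by omega) hkd hi)
    (fun a b hab hC => hx ▸ blockSwap_lt_blockSwap hdk hab hC)
  rw [hxinv] at hinv
  zify at hC hlt hinv
  omega

theorem lt_blockSwap_add_one {n : ℕ} {v : ℕ → ℕ} (hd : 1 ≤ d) (hdk : d ≤ k) (hkd : k + d ≤ n + 1)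
    (hv : ∀ j, 1 ≤ j → j ≤ n → j ≠ k → v j < v (j + 1)) (hjunction : v (k + d) < v (k - d + 1))
    (h₁ : k - d + 1 ≤ i) (h₂ : i < k + d) : v (blockSwap k d i) < v (blockSwap k d (i + 1)) := by
  rcases lt_trichotomy i k with hik | rfl | hik
  · rw [blockSwap_of_left h₁ hik.le, blockSwap_of_left (by omega) hik]
    convert hv (i + d) (by omega) (by omega) (by omega) using 2; omega
  · rw [blockSwap_of_left h₁ le_rfl, blockSwap_of_right le_rfl (by omega)]
    convert hjunction using 2; omega
  · rw [blockSwap_of_right hik h₂.le, blockSwap_of_right (by omega) h₂]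
    convert hv (i - d) (by omega) (by omega) (by omega) using 2; omega

end BlockSwap

theorem blockSwap_sorts_values_general (n k d : ℕ) (hd1 : 1 ≤ d) (hdk : d ≤ k) (hdn : d ≤ n + 1 - k)
    (x : Equiv.Perm ℕ)
    (hx : ∀ i, x i = if k - d + 1 ≤ i ∧ i ≤ k then i + d
      else if k + 1 ≤ i ∧ i ≤ k + d then i - d else i)
    (v : Equiv.Perm ℕ)
    (hvgrass : ∀ j, 1 ≤ j → j ≤ n → j ≠ k → v j < v (j + 1))
    (hlen : (invNum n (v * x) : ℤ) = (invNum n v : ℤ) - d ^ 2) :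
    (∀ i, i ∉ Finset.Icc (k - d + 1) (k + d) → (v * x) i = v i) ∧
    (∀ i, k - d + 1 ≤ i → i < k + d → (v * x) i < (v * x) (i + 1)) ∧
    (Finset.Icc (k - d + 1) (k + d)).image ⇑(v * x) =
      (Finset.Icc (k - d + 1) (k + d)).image ⇑v := by
  have hx' : ⇑x = blockSwap k d := funext hx
  have hkd : k + d ≤ n + 1 := by omega
  have hjunction := lt_of_invNum_mul_blockSwap hd1 hdk hkd hx' hlen
  refine ⟨fun i hi => ?_, fun i h₁ h₂ => ?_, ?_⟩
  · rw [Perm.mul_apply, hx', blockSwap_of_notMem hi]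
  · simpa only [Perm.mul_apply, hx'] using lt_blockSwap_add_one hd1 hdk hkd hvgrass hjunction h₁ h₂
  · rw [Perm.coe_mul, ← image_image, hx', image_blockSwap_Icc hdk]

/-- **(Remark 2.16.)**  If `v` is a minimal length coset representative for
`Gr(k, n+1)` and `inv(v∘x) = inv(v) − d²` for the block-swap permutation `x`, then
`v∘x` agrees with `v` outside `{k−d+1, …, k+d}` and is obtained from `v` by sorting the
values `v(k−d+1), …, v(k+d)` into increasing order. -/
theorem blockSwap_sorts_values (n k d : ℕ) (hn : 1 ≤ n) (hk1 : 1 ≤ k)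
    (hkn : k ≤ n) (hd1 : 1 ≤ d) (hdk : d ≤ k) (hdn : d ≤ n + 1 - k)
    (x : Equiv.Perm ℕ)
    (hx : ∀ i, x i = if k - d + 1 ≤ i ∧ i ≤ k then i + d
      else if k + 1 ≤ i ∧ i ≤ k + d then i - d else i)
    (v : Equiv.Perm ℕ)
    (hvfix : ∀ i, i ∉ Finset.Icc 1 (n + 1) → v i = i)
    (hvgrass : ∀ j, 1 ≤ j → j ≤ n → j ≠ k → v j < v (j + 1))
    (hlen : (invNum n (v * x) : ℤ) = (invNum n v : ℤ) - d ^ 2) :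
    (∀ i, i ∉ Finset.Icc (k - d + 1) (k + d) → (v * x) i = v i) ∧
    (∀ i, k - d + 1 ≤ i → i < k + d → (v * x) i < (v * x) (i + 1)) ∧
    (Finset.Icc (k - d + 1) (k + d)).image ⇑(v * x) =
      (Finset.Icc (k - d + 1) (k + d)).image ⇑v :=
  blockSwap_sorts_values_general n k d hd1 hdk hdn x hx v hvgrass hlen
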